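/- arXiv:1506.01270 — 2 statements merged into one kernel-verified Lean document; each statement's English description precedes it below -/
import Mathlib

section
/- Let p be a prime number, let A be a finitely generated ℤ_p-module, and let G be a group acting on A by ℤ_p-linear automorphisms; extend the action of G to A ⊗_{ℤ_p} (ℚ_p/ℤ_p) by letting G act trivially on ℚ_p/ℤ_p. Then the subgroup of G-invariant elements (A ⊗_{ℤ_p} ℚ_p/ℤ_p)^G is infinite if and only if the submodule of G-invariants A^G contains an element of infinite order. -/
/-!
Put `V = ℚ_p ⊗ A` and let `L` be the image of `A` in `V`, so that `(ℚ_p/ℤ_p) ⊗ A ≅ V/L`; the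
argument works over any domain `R` with finite quotients, of characteristic zero and not a field,
with `K` its fraction field in place of `ℚ_p`.

If every invariant of `A` is torsion, `V` has no nonzero fixed vector, and already finitely many
`g` have no common fixed vector. An invariant class `[v] ∈ V/L` has `g v - v ∈ L` for all `g`,
which confines `v` to a finitely generated submodule of `V`; its image in `V/L` is finitely
generated and torsion, hence finite.

Conversely, for an invariant `a` of infinite order, `q ↦ q ⊗ a` maps the divisible group `K/R`
into the invariants. If the image were finite the map would vanish, so `K • (1 ⊗ a) ⊆ L` would be
a finitely generated `R`-module isomorphic to `K`, forcing `R` to be a field.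
-/

open TensorProduct Submodule
open scoped nonZeroDivisors

section Torsion

variable {R M : Type*} [CommRing R] [AddCommGroup M] [Module R M]

theorem mem_torsion_iff_isOfFinAddOrder [IsDomain R] [CharZero R] [Ring.HasFiniteQuotients R]
    {a : M} : a ∈ torsion R M ↔ IsOfFinAddOrder a := by
  refine ⟨fun ha => ?_, fun ha => ?_⟩
  · obtain ⟨c, hc⟩ := (mem_torsion_iff a).mp ha
    have : Finite (R ⧸ Ideal.span {(c : R)}) := Ring.HasFiniteQuotients.finiteQuotient (by simp)
    -- `c` divides the order of the finite ring `R ⧸ (c)`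
    obtain ⟨d, hd⟩ : (c : R) ∣ Nat.card (R ⧸ Ideal.span {(c : R)}) := by
      rw [← Ideal.mem_span_singleton, ← Ideal.Quotient.eq_zero_iff_mem, map_natCast,
        ← nsmul_one]
      exact card_nsmul_eq_zero'
    refine isOfFinAddOrder_iff_nsmul_eq_zero.mpr
      ⟨Nat.card (R ⧸ Ideal.span {(c : R)}), Nat.card_pos, ?_⟩
    rw [← Nat.cast_smul_eq_nsmul R, hd, mul_comm, mul_smul, ← Submonoid.smul_def, hc, smul_zero]
  · obtain ⟨n, hn, hna⟩ := isOfFinAddOrder_iff_nsmul_eq_zero.mp ha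
    refine (mem_torsion_iff a).mpr
      ⟨⟨n, mem_nonZeroDivisors_of_ne_zero (Nat.cast_ne_zero.mpr hn.ne')⟩, ?_⟩
    rw [Submonoid.smul_def, Nat.cast_smul_eq_nsmul, hna]

theorem Module.IsTorsion.finite [Ring.HasFiniteQuotients R] [Nontrivial R] [Module.Finite R M]
    (hM : Module.IsTorsion R M) : Finite M := by
  obtain ⟨c, hcM, hc⟩ := annihilator_top_inter_nonZeroDivisors hM
  have : Finite (R ⧸ (⊤ : Submodule R M).annihilator) :=
    Ring.HasFiniteQuotients.finiteQuotient
      ((Submodule.ne_bot_iff _).mpr ⟨c, hcM, nonZeroDivisors.ne_zero hc⟩)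
  let := (Module.isTorsionBySet_annihilator_top R M).module
  have : Module.Finite (R ⧸ (⊤ : Submodule R M).annihilator) M :=
    Module.Finite.of_restrictScalars_finite R _ _
  exact Module.finite_of_finite (R ⧸ (⊤ : Submodule R M).annihilator)

end Torsion

instance PadicInt.hasFiniteQuotients {p : ℕ} [Fact p.Prime] : Ring.HasFiniteQuotients ℤ_[p] where
  finiteQuotient {I} hI := by
    obtain ⟨n, rfl⟩ := PadicInt.ideal_eq_span_pow_p hI
    rw [← PadicInt.ker_toZModPow]
    exact Finite.of_injective _ (RingHom.kerLift_injective _)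

section QuotientTensor

variable {R K A : Type*} [CommRing R] [Field K] [Algebra R K] [AddCommGroup A] [Module R A]

local notation "Q" => K ⧸ LinearMap.range (Algebra.linearMap R K)

theorem range_rTensor_algebraLinearMap :
    LinearMap.range ((Algebra.linearMap R K).rTensor A) = LinearMap.range (mk R K A 1) := by
  rw [← LinearMap.range_comp_of_range_eq_top _ (TensorProduct.lid R A).symm.range]
  congr 1
  ext a
  simp

theorem ker_rTensor_mkQ_range_algebraLinearMap :
    LinearMap.ker ((LinearMap.range (Algebra.linearMap R K)).mkQ.rTensor A)
      = LinearMap.range (mk R K A 1) := by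
  rw [← range_rTensor_algebraLinearMap]
  exact LinearMap.exact_iff.mp
    (rTensor_exact A (LinearMap.exact_map_mkQ_range _) (mkQ_surjective _))

theorem rTensor_mkQ_baseChange (f : A →ₗ[R] A) (v : K ⊗[R] A) :
    (LinearMap.range (Algebra.linearMap R K)).mkQ.rTensor A (f.baseChange K v)
      = f.lTensor Q ((LinearMap.range (Algebra.linearMap R K)).mkQ.rTensor A v) := by
  rw [LinearMap.baseChange_eq_ltensor, ← LinearMap.comp_apply, LinearMap.rTensor_comp_lTensor,
    ← LinearMap.lTensor_comp_rTensor, LinearMap.comp_apply]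

theorem AddMonoidHom.eq_zero_of_finite_range_of_quotient [CharZero K] {M : Type*}
    [AddCommGroup M]
    (f : Q →+ M) (hf : (Set.range f).Finite) : f = 0 := by
  have : Finite f.range := hf.to_subtype
  refine AddMonoidHom.ext fun x => ?_
  obtain ⟨y, rfl⟩ := mkQ_surjective _ x
  set n := Nat.card f.range
  have hn : (n : K) ≠ 0 := Nat.cast_ne_zero.mpr Nat.card_pos.ne'
  -- `n` kills the finite group `f.range`, and `K ⧸ R` is divisible by `n`
  calc f (mkQ _ y) = n • f (mkQ _ (y / n)) := by
        rw [← map_nsmul, ← map_nsmul, nsmul_eq_mul, mul_div_cancel₀ _ hn]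
    _ = 0 := congrArg Subtype.val (card_nsmul_eq_zero' (x := (⟨f _, _, rfl⟩ : f.range)))

variable [IsFractionRing R K]

theorem ker_mk_one_eq_torsion : LinearMap.ker (mk R K A 1) = torsion R A := by
  ext a
  rw [LinearMap.mem_ker, IsLocalizedModule.eq_zero_iff R⁰, mem_torsion_iff]

theorem eq_zero_of_nonZeroDivisors_smul_eq_zero [IsDomain R] {c : R⁰} {v : K ⊗[R] A}
    (h : c • v = 0) : v = 0 := by
  rw [Submonoid.smul_def, ← algebraMap_smul K] at h
  exact (smul_eq_zero.mp h).resolve_left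
    (IsFractionRing.to_map_ne_zero_of_mem_nonZeroDivisors c.2)

theorem isTorsion_quotient_tensor : Module.IsTorsion R (Q ⊗[R] A) := by
  intro x
  obtain ⟨v, rfl⟩ := LinearMap.rTensor_surjective A (mkQ_surjective _) x
  obtain ⟨⟨b, c⟩, hc⟩ := IsLocalizedModule.surj R⁰ (mk R K A 1) v
  refine ⟨c, ?_⟩
  rw [← LinearMap.map_smul_of_tower, hc, ← LinearMap.mem_ker,
    ker_rTensor_mkQ_range_algebraLinearMap]
  exact LinearMap.mem_range_self _ _

theorem eq_zero_of_forall_baseChange_apply_eq [IsDomain R] [IsNoetherianRing R]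
    [Module.Finite R A]
    {ι : Type*} (T : ι → Module.End R A) (hA : ∀ a, (∀ i, T i a = a) → a ∈ torsion R A)
    {v : K ⊗[R] A} (hv : ∀ i, (T i).baseChange K v = v) : v = 0 := by
  obtain ⟨⟨b, c⟩, hc⟩ := IsLocalizedModule.surj R⁰ (mk R K A 1) v
  obtain ⟨d, hd, hdR⟩ :=
    annihilator_top_inter_nonZeroDivisors (torsion_isTorsion (R := R) (M := A))
  have hb : ∀ i, T i b - b ∈ torsion R A := fun i => by
    rw [← ker_mk_one_eq_torsion (K := K), LinearMap.mem_ker, map_sub, sub_eq_zero]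
    calc mk R K A 1 (T i b) = (T i).baseChange K (mk R K A 1 b) := rfl
      _ = mk R K A 1 b := by rw [← hc, LinearMap.map_smul_of_tower, hv]
  -- `d` kills the torsion of `A`, so `d • b` is fixed on the nose
  have hdb : ∀ i, T i (d • b) = d • b := fun i => by
    have := mem_annihilator.mp hd ⟨_, hb i⟩ mem_top
    rw [map_smul, ← sub_eq_zero, ← smul_sub]
    exact congrArg Subtype.val this
  obtain ⟨e, he⟩ := (mem_torsion_iff _).mp (hA _ hdb)
  refine eq_zero_of_nonZeroDivisors_smul_eq_zero (c := e * ⟨d, hdR⟩ * c) ?_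
  rw [mul_smul, hc, Submonoid.smul_def, Submonoid.coe_mul, mul_smul, ← map_smul, ← map_smul]
  simp only [Submonoid.smul_def] at he
  rw [he, map_zero]

theorem IsArtinian.exists_finset_forall_apply_eq_self {S V ι : Type*} [Ring S] [AddCommGroup V]
    [Module S V] [IsArtinian S V] (T : ι → Module.End S V) :
    ∃ s : Finset ι, ∀ v, (∀ i ∈ s, T i v = v) → ∀ i, T i v = v := by
  obtain ⟨s, hs⟩ := Finset.exists_inf_le fun i => LinearMap.ker (T i - 1)
  refine ⟨s, fun v hv i => ?_⟩
  have hvs : v ∈ s.inf fun i => LinearMap.ker (T i - 1) :=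
    mem_finsetInf.mpr fun i hi => by simp [hv i hi]
  simpa [sub_eq_zero] using hs i hvs

theorem finite_setOf_lTensor_apply_eq [IsDomain R] [Ring.HasFiniteQuotients R]
    [Module.Finite R A]
    {ι : Type*} (T : ι → Module.End R A) (hA : ∀ a, (∀ i, T i a = a) → a ∈ torsion R A) :
    {x : Q ⊗[R] A | ∀ i, (T i).lTensor Q x = x}.Finite := by
  obtain ⟨s, hs⟩ := IsArtinian.exists_finset_forall_apply_eq_self fun i => (T i).baseChange K
  let Φ : K ⊗[R] A →ₗ[K] (s → K ⊗[R] A) := LinearMap.pi fun i => (T i).baseChange K - 1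
  have hΦ : LinearMap.ker Φ = ⊥ := by
    refine LinearMap.ker_eq_bot'.mpr fun v hv =>
      eq_zero_of_forall_baseChange_apply_eq T hA (hs v fun i hi => ?_)
    simpa [Φ, sub_eq_zero] using congrFun hv ⟨i, hi⟩
  obtain ⟨ψ, hψ⟩ := Φ.exists_leftInverse_of_injective hΦ
  let N : Submodule R (Q ⊗[R] A) :=
    ((pi Set.univ fun _ : s => LinearMap.range (mk R K A 1)).map (ψ.restrictScalars R)).map
      ((LinearMap.range (Algebra.linearMap R K)).mkQ.rTensor A)
  have : Module.Finite R N := Module.Finite.iff_fg.mpr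
    (((fg_pi fun _ => fg_range _).map _).map _)
  have : Finite N := Module.IsTorsion.finite fun x =>
    have ⟨c, hc⟩ := isTorsion_quotient_tensor (R := R) (K := K) (A := A) (x := x.1)
    ⟨c, Subtype.ext hc⟩
  refine (Set.toFinite (N : Set (Q ⊗[R] A))).subset fun x hx => ?_
  obtain ⟨v, rfl⟩ := LinearMap.rTensor_surjective A (mkQ_surjective _) x
  have hΦv : Φ v ∈ pi Set.univ fun _ : s => LinearMap.range (mk R K A 1) := fun i _ => by
    rw [SetLike.mem_coe, ← ker_rTensor_mkQ_range_algebraLinearMap, LinearMap.mem_ker]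
    simp [Φ, rTensor_mkQ_baseChange, hx i]
  exact ⟨v, ⟨Φ v, hΦv, LinearMap.congr_fun hψ v⟩, rfl⟩

theorem mem_torsion_of_forall_mkQ_tmul_eq_zero [IsDomain R] [IsNoetherianRing R]
    [Module.Finite R A] (hR : ¬IsField R) {a : A}
    (ha : ∀ y : K, (LinearMap.range (Algebra.linearMap R K)).mkQ y ⊗ₜ[R] a = 0) :
    a ∈ torsion R A := by
  rw [← ker_mk_one_eq_torsion (K := K), LinearMap.mem_ker]
  by_contra hθ
  let g : K →ₗ[R] K ⊗[R] A := (mk R K A).flip a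
  have hg : Function.Injective g := by
    refine (injective_iff_map_eq_zero g).mpr fun y hy => ?_
    have : y • mk R K A 1 a = 0 := by simpa [g, smul_tmul'] using hy
    exact (smul_eq_zero.mp this).resolve_right hθ
  have hgL : ∀ y, g y ∈ LinearMap.range (mk R K A 1) := fun y => by
    rw [← ker_rTensor_mkQ_range_algebraLinearMap, LinearMap.mem_ker]
    simpa [g] using ha y
  have : Module.Finite R K := Module.Finite.of_injective (g.codRestrict _ hgL)
    fun _ _ h => hg (congrArg Subtype.val h)
  exact hR (isField_of_isIntegral_of_isField (IsFractionRing.injective R K) (Field.toIsField K))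

theorem infinite_setOf_lTensor_apply_eq [IsDomain R] [IsNoetherianRing R] [CharZero K]
    [Module.Finite R A] (hR : ¬IsField R) {ι : Type*} (T : ι → Module.End R A) {a : A}
    (ha : ∀ i, T i a = a) (hat : a ∉ torsion R A) :
    {x : Q ⊗[R] A | ∀ i, (T i).lTensor Q x = x}.Infinite := by
  intro hfin
  let f : Q →+ Q ⊗[R] A := ((mk R Q A).flip a).toAddMonoidHom
  have hf : Set.range f ⊆ {x : Q ⊗[R] A | ∀ i, (T i).lTensor Q x = x} := by
    rintro _ ⟨q, rfl⟩ i
    simp [f, ha i]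
  have hf0 := AddMonoidHom.eq_zero_of_finite_range_of_quotient f (hfin.subset hf)
  exact hat (mem_torsion_of_forall_mkQ_tmul_eq_zero hR fun y =>
    DFunLike.congr_fun hf0 (mkQ _ y))

theorem infinite_setOf_lTensor_apply_eq_iff [IsDomain R] [Ring.HasFiniteQuotients R]
    [CharZero K] [Module.Finite R A] (hR : ¬IsField R) {ι : Type*} (T : ι → Module.End R A) :
    {x : Q ⊗[R] A | ∀ i, (T i).lTensor Q x = x}.Infinite ↔
      ∃ a, (∀ i, T i a = a) ∧ a ∉ torsion R A := by
  refine ⟨fun h => ?_, fun ⟨a, ha, hat⟩ => infinite_setOf_lTensor_apply_eq hR T ha hat⟩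
  by_contra! hA
  exact h (finite_setOf_lTensor_apply_eq T hA)

end QuotientTensor

/-- **Lemma 2.4.** Let `A` be a finitely generated `ℤ_p`-module with a `ℤ_p`-linear
action of a group `G` (given by `ρ`), and let `G` act on `A ⊗[ℤ_p] (ℚ_p/ℤ_p)` through
the first factor. Then the set of `G`-invariant elements of `A ⊗[ℤ_p] (ℚ_p/ℤ_p)` is
infinite if and only if `A^G` contains an element of infinite order. -/
theorem stmt0 {p : ℕ} [Fact p.Prime]
    (A : Type) [AddCommGroup A] [Module ℤ_[p] A] [Module.Finite ℤ_[p] A]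
    {G : Type} [Group G] (ρ : G →* (A ≃ₗ[ℤ_[p]] A)) :
    {x : A ⊗[ℤ_[p]] (ℚ_[p] ⧸ LinearMap.range (Algebra.linearMap ℤ_[p] ℚ_[p])) |
        ∀ g : G, LinearMap.rTensor
          (ℚ_[p] ⧸ LinearMap.range (Algebra.linearMap ℤ_[p] ℚ_[p])) (ρ g).toLinearMap x = x}.Infinite
      ↔ ∃ a : A, (∀ g : G, ρ g a = a) ∧ ¬ IsOfFinAddOrder a := by
  set Q := ℚ_[p] ⧸ LinearMap.range (Algebra.linearMap ℤ_[p] ℚ_[p])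
  have hcomm : {x : A ⊗[ℤ_[p]] Q | ∀ g : G, (ρ g).toLinearMap.rTensor Q x = x}
      = (TensorProduct.comm ℤ_[p] A Q).symm ''
          {y : Q ⊗[ℤ_[p]] A | ∀ g : G, (ρ g).toLinearMap.lTensor Q y = y} := by
    rw [LinearEquiv.image_symm_eq_preimage]
    ext x
    simp only [Set.mem_ofPred_eq, Set.mem_preimage, LinearMap.lTensor_comm,
      (TensorProduct.comm ℤ_[p] A Q).injective.eq_iff]
  rw [hcomm, Set.infinite_image_iff (TensorProduct.comm ℤ_[p] A Q).symm.injective.injOn,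
    infinite_setOf_lTensor_apply_eq_iff (IsDiscreteValuationRing.not_isField ℤ_[p])]
  simp only [LinearEquiv.coe_coe, mem_torsion_iff_isOfFinAddOrder]
end

section
/- Let V be a finite-dimensional vector space over a field F, let Γ be a group acting on V by linear automorphisms, and let N be a normal subgroup of Γ. Suppose γ₁, γ₂ ∈ Γ lie in the same coset of N (i.e. γ₁⁻¹γ₂ ∈ N) and the characteristic polynomials of the actions of γ₁ and γ₂ on V are coprime in F[X]. Then the subspace of N-fixed vectors V^N = {v ∈ V : n·v = v for all n ∈ N} is zero. -/
/-!
If `ρ γ₁` and `ρ γ₂` leave the subspace `V^N` of `N`-fixed vectors invariant and agree on it,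
then their restrictions to `V^N` coincide, so this single endomorphism of `V^N` is annihilated by
both characteristic polynomials. Being coprime, these generate the unit ideal of `F[X]`, so the
identity of `V^N` vanishes. Invariance holds because `N` is normal, and agreement because
`γ₁⁻¹ γ₂ ∈ N` fixes `V^N` pointwise.
-/

open Polynomial

theorem Module.End.aeval_restrict_apply {R M : Type*} [CommRing R] [AddCommGroup M] [Module R M]
    (f : Module.End R M) {W : Submodule R M} (hW : ∀ x ∈ W, f x ∈ W) (p : R[X]) (w : W) :
    (aeval (f.restrict hW) p w : M) = aeval f p (w : M) := by
  induction p using Polynomial.induction_on' with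
  | add p q hp hq => simp only [map_add, LinearMap.add_apply, Submodule.coe_add, hp, hq]
  | monomial n a =>
    simp only [aeval_monomial, Module.End.pow_restrict n hW, Module.End.mul_apply,
      Module.algebraMap_end_apply, SetLike.val_smul, LinearMap.coe_restrict_apply]

theorem Submodule.eq_bot_of_isCoprime_of_aeval_eq_zero {R M : Type*} [CommRing R]
    [AddCommGroup M] [Module R M] {f g : Module.End R M} {W : Submodule R M}
    (hf : ∀ x ∈ W, f x ∈ W) (hfg : ∀ x ∈ W, f x = g x) {p q : R[X]}
    (hp : aeval f p = 0) (hq : aeval g q = 0) (hpq : IsCoprime p q) : W = ⊥ := by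
  have hg : ∀ x ∈ W, g x ∈ W := fun x hx => hfg x hx ▸ hf x hx
  have hrestrict : f.restrict hf = g.restrict hg :=
    LinearMap.ext fun x => Subtype.ext (hfg x x.2)
  have hp' : aeval (f.restrict hf) p = 0 := by
    ext w
    rw [Module.End.aeval_restrict_apply, hp]
    rfl
  have hq' : aeval (f.restrict hf) q = 0 := by
    ext w
    rw [hrestrict, Module.End.aeval_restrict_apply, hq]
    rfl
  obtain ⟨a, b, hab⟩ := hpq
  have hone : (1 : Module.End R W) = 0 := by
    simpa [hp', hq'] using congrArg (aeval (f.restrict hf)) hab.symm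
  rw [eq_bot_iff]
  intro x hx
  simpa using congrArg Subtype.val (LinearMap.congr_fun hone ⟨x, hx⟩)

section FixedSubmodule

variable {R V Γ : Type*} [Semiring R] [AddCommMonoid V] [Module R V] [Group Γ]
  (ρ : Γ →* (V ≃ₗ[R] V)) (N : Subgroup Γ)

def fixedSubmodule : Submodule R V where
  carrier := {v | ∀ n ∈ N, ρ n v = v}
  add_mem' ha hb n hn := by simp [ha n hn, hb n hn]
  zero_mem' _ _ := map_zero _
  smul_mem' c _ ha n hn := by simp [ha n hn]

variable {ρ N}

theorem mem_fixedSubmodule {v : V} : v ∈ fixedSubmodule ρ N ↔ ∀ n ∈ N, ρ n v = v := Iff.rfl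

theorem apply_mem_fixedSubmodule [N.Normal] (γ : Γ) {v : V} (hv : v ∈ fixedSubmodule ρ N) :
    ρ γ v ∈ fixedSubmodule ρ N := by
  intro n hn
  calc ρ n (ρ γ v) = ρ γ (ρ (γ⁻¹ * n * γ) v) := by
        simp only [← LinearEquiv.mul_apply, ← map_mul]
        group
    _ = ρ γ v := by rw [hv _ (‹N.Normal›.conj_mem' n hn γ)]

theorem apply_eq_apply_of_inv_mul_mem {γ₁ γ₂ : Γ} (h : γ₁⁻¹ * γ₂ ∈ N) {v : V}
    (hv : v ∈ fixedSubmodule ρ N) : ρ γ₁ v = ρ γ₂ v := by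
  calc ρ γ₁ v = ρ γ₁ (ρ (γ₁⁻¹ * γ₂) v) := by rw [hv _ h]
    _ = ρ γ₂ v := by simp only [← LinearEquiv.mul_apply, ← map_mul, mul_inv_cancel_left]

end FixedSubmodule

/-- Let `Γ` act on a finite-dimensional `F`-vector space `V` by linear automorphisms
(via `ρ`), let `N` be a normal subgroup of `Γ`, and let `γ₁, γ₂ ∈ Γ` lie in the same
coset of `N`. If the characteristic polynomials of the actions of `γ₁` and `γ₂` on `V`
are coprime, then the subspace of `N`-fixed vectors is zero. -/
theorem stmt5 (F : Type*) [Field F] (V : Type*) [AddCommGroup V] [Module F V]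
    [FiniteDimensional F V]
    (Γ : Type*) [Group Γ] (ρ : Γ →* (V ≃ₗ[F] V))
    (N : Subgroup Γ) [N.Normal] (γ₁ γ₂ : Γ) (hcoset : γ₁⁻¹ * γ₂ ∈ N)
    (hcop : IsCoprime (LinearMap.charpoly (ρ γ₁).toLinearMap)
      (LinearMap.charpoly (ρ γ₂).toLinearMap)) :
    ∀ v : V, (∀ n ∈ N, ρ n v = v) → v = 0 := by
  intro v hv
  have hbot : fixedSubmodule ρ N = ⊥ :=
    Submodule.eq_bot_of_isCoprime_of_aeval_eq_zero
      (fun _ hx => apply_mem_fixedSubmodule γ₁ hx)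
      (fun _ hx => apply_eq_apply_of_inv_mul_mem hcoset hx)
      (LinearMap.aeval_self_charpoly _) (LinearMap.aeval_self_charpoly _) hcop
  exact (Submodule.mem_bot F).1 (hbot ▸ mem_fixedSubmodule.2 hv)
end
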